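/- arXiv:math/0409286 — 2 statements merged into one kernel-verified Lean document; each statement's English description precedes it below -/
import Mathlib

section
/- Let ℓ be an odd prime and let M be an r×r matrix with entries in the ring ℤ_ℓ of ℓ-adic integers such that M is congruent to the identity matrix modulo ℓ (i.e., every entry of M - 1 lies in ℓℤ_ℓ). If M is quasi-unipotent, i.e., there exists an integer k ≥ 1 such that (M^k - 1)^r = 0, then M is unipotent, i.e., (M - 1)^r = 0. -/
open Finset
set_option synthInstance.maxHeartbeats 1000000
set_option maxHeartbeats 1000000

namespace QUaux

variable {ℓ : ℕ} [Fact ℓ.Prime] {r : ℕ}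

local notation "R" => PadicInt ℓ
local notation "Mat" => Matrix (Fin r) (Fin r) (PadicInt ℓ)

lemma ell_ne_zero : ((ℓ : R)) ≠ 0 := by
  have := (Fact.out : ℓ.Prime).pos
  exact_mod_cast Nat.cast_ne_zero.mpr this.ne'

lemma not_ell_unit : ¬ IsUnit ((ℓ : R)) := by
  rw [PadicInt.not_isUnit_iff, PadicInt.norm_p]
  have h1 : (1:ℝ) < (ℓ:ℝ) := by exact_mod_cast (Fact.out : ℓ.Prime).one_lt
  rw [inv_lt_one_iff₀]
  right; exact h1

lemma smul_cancel {X Y : Mat} (h : (ℓ : R) • X = (ℓ : R) • Y) : X = Y := by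
  funext i j
  have := congrFun (congrFun h i) j
  have h2 : (ℓ : R) * X i j = (ℓ : R) * Y i j := by
    simpa [Matrix.smul_apply, smul_eq_mul] using this
  exact mul_left_cancel₀ ell_ne_zero h2

lemma smul_pow_cancel {X : Mat} (h : ((ℓ : R))^r • X = 0) : X = 0 := by
  funext i j
  have := congrFun (congrFun h i) j
  simp only [Matrix.smul_apply, Matrix.zero_apply, smul_eq_mul] at this
  exact (mul_eq_zero.mp this).resolve_left (pow_ne_zero r ell_ne_zero)

/-- entrywise divisibility of a product, right factor divisible -/
lemma dvd_mul_right' {X Y : Mat} (h : ∀ i j, (ℓ : R) ∣ Y i j) :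
    ∀ i j, (ℓ : R) ∣ (X * Y) i j := by
  intro i j
  rw [Matrix.mul_apply]
  exact Finset.dvd_sum fun k _ => (h k j).mul_left _

/-- powers of a matrix congruent to 1 are congruent to 1 -/
lemma pow_cong {M : Mat} (h : ∀ i j, (ℓ : R) ∣ (M - 1) i j) (n : ℕ) :
    ∀ i j, (ℓ : R) ∣ (M ^ n - 1) i j := by
  induction n with
  | zero => simp
  | succ n ih =>
    have key : M ^ (n+1) - 1 = M ^ n * (M - 1) + (M ^ n - 1) := by
      rw [pow_succ]; noncomm_ring
    intro i j
    rw [key]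
    exact dvd_add (dvd_mul_right' h i j) (ih i j)

/-- a matrix congruent to `c • 1` with `c` a unit is invertible -/
lemma isUnit_of_cong (c : R) (hc : IsUnit c) (S : Mat)
    (h : ∀ i j, (ℓ : R) ∣ (S - c • 1) i j) : IsUnit S := by
  rw [Matrix.isUnit_iff_isUnit_det]
  set I : Ideal R := Ideal.span {(ℓ : R)}
  set f : R →+* R ⧸ I := Ideal.Quotient.mk I with hf
  have hmap : S.map f = (f c) • (1 : Matrix (Fin r) (Fin r) (R ⧸ I)) := by
    funext i j
    have h0 : f ((S - c • 1) i j) = 0 := by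
      rw [hf, Ideal.Quotient.eq_zero_iff_mem]
      exact Ideal.mem_span_singleton.mpr (h i j)
    have he : S i j = (c • (1 : Mat)) i j + (S - c • 1) i j := by simp
    simp only [Matrix.map_apply, Matrix.smul_apply]
    rw [he, map_add, h0, add_zero]
    simp [Matrix.one_apply, apply_ite f, Matrix.smul_apply]
  have hdet : f S.det = f (c ^ r) := by
    rw [RingHom.map_det, RingHom.mapMatrix_apply, hmap]
    simp [Matrix.det_smul, smul_eq_mul]
  have hdvd : (ℓ : R) ∣ S.det - c ^ r := by
    rw [← Ideal.mem_span_singleton, ← Ideal.Quotient.eq_zero_iff_mem]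
    rw [map_sub, hdet, sub_self]
  by_contra hn
  rw [PadicInt.not_isUnit_iff, PadicInt.norm_lt_one_iff_dvd] at hn
  have h2 : (ℓ : R) ∣ c ^ r := by
    have := dvd_sub hn hdvd
    simpa using this
  exact not_ell_unit (isUnit_of_dvd_unit h2 (hc.pow r))

end QUaux

namespace QUaux
variable {ℓ : ℕ} [Fact ℓ.Prime] {r : ℕ}
local notation "R" => PadicInt ℓ
local notation "Mat" => Matrix (Fin r) (Fin r) (PadicInt ℓ)

lemma isUnit_natCast_of_not_dvd {m : ℕ} (hm : ¬ ℓ ∣ m) : IsUnit ((m : R)) := by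
  by_contra hn
  rw [PadicInt.not_isUnit_iff, PadicInt.norm_lt_one_iff_dvd] at hn
  have hcop : Nat.Coprime ℓ m := ((Fact.out : ℓ.Prime).coprime_iff_not_dvd).mpr hm
  have hZ : IsCoprime (ℓ : ℤ) (m : ℤ) := Nat.isCoprime_iff_coprime.mpr hcop
  have hR : IsCoprime ((ℓ : ℤ) : R) ((m : ℤ) : R) := hZ.map (Int.castRingHom R)
  obtain ⟨u, v, huv⟩ := hR
  push_cast at huv
  have h1 : (ℓ : R) ∣ 1 := by
    rw [← huv]
    exact dvd_add (dvd_mul_left _ _) (hn.mul_left v)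
  exact not_ell_unit (isUnit_of_dvd_one h1)

lemma smul_commute_cancel {X Y : Mat} (h : Commute ((ℓ : R) • X) Y) : Commute X Y := by
  have h2 : (ℓ : R) • (X * Y) = (ℓ : R) • (Y * X) := by
    have := h.eq
    rwa [Matrix.smul_mul, Matrix.mul_smul] at this
  exact smul_cancel h2

lemma commute_sum_pow (M : Mat) (n : ℕ) : Commute (∑ j ∈ range n, M ^ j) (M - 1) :=
  Commute.sum_left _ _ _ fun j _ =>
    ((Commute.refl M).pow_left j).sub_right (Commute.one_right _)

/-- Lemma B: coprime exponent case -/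
lemma coprime_case {M : Mat} (hcong : ∀ i j, (ℓ : R) ∣ (M - 1) i j)
    {m : ℕ} (hm : ¬ ℓ ∣ m) (hqu : (M ^ m - 1) ^ r = 0) : (M - 1) ^ r = 0 := by
  set S : Mat := ∑ j ∈ range m, M ^ j with hSdef
  have hgeom : S * (M - 1) = M ^ m - 1 := geom_sum_mul M m
  have hcomm : Commute S (M - 1) := commute_sum_pow M m
  have hS : IsUnit S := by
    apply isUnit_of_cong (m : R) (isUnit_natCast_of_not_dvd hm)
    intro i j
    have hsub : S - (m : R) • 1 = ∑ j ∈ range m, (M ^ j - 1) := by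
      rw [Finset.sum_sub_distrib, Finset.sum_const, card_range, hSdef,
        Nat.cast_smul_eq_nsmul]
    rw [hsub, Matrix.sum_apply]
    exact Finset.dvd_sum fun j' _ => pow_cong hcong j' i j
  have h0 : S ^ r * (M - 1) ^ r = 0 := by
    rw [← hcomm.mul_pow, hgeom, hqu]
  obtain ⟨u, hu⟩ := hS.pow (n := r)
  have : (M - 1) ^ r = (↑u⁻¹ : Mat) * (S ^ r * (M - 1) ^ r) := by
    rw [← hu, ← mul_assoc, Units.inv_mul, one_mul]
  rw [this, h0, mul_zero]

end QUaux

namespace QUaux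
variable {ℓ : ℕ} [Fact ℓ.Prime] {r : ℕ}
local notation "R" => PadicInt ℓ
local notation "Mat" => Matrix (Fin r) (Fin r) (PadicInt ℓ)

/-- Lemma A: the exponent-ℓ case, where oddness of ℓ is used -/
lemma ell_case (hodd : Odd ℓ) {M : Mat} (hcong : ∀ i j, (ℓ : R) ∣ (M - 1) i j)
    (hqu : (M ^ ℓ - 1) ^ r = 0) : (M - 1) ^ r = 0 := by
  set A : Mat := M - 1 with hAdef
  set S : Mat := ∑ j ∈ range ℓ, M ^ j with hSdef
  have hgeom : S * A = M ^ ℓ - 1 := geom_sum_mul M ℓ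
  set T : Mat := ∑ j ∈ range ℓ, ∑ i ∈ range j, M ^ i with hTdef
  have hTA : T * A = S - (ℓ : R) • 1 := by
    rw [hTdef, Finset.sum_mul]
    have he : ∀ j, (∑ i ∈ range j, M ^ i) * A = M ^ j - 1 := fun j => geom_sum_mul M j
    rw [Finset.sum_congr rfl fun j _ => he j, Finset.sum_sub_distrib,
      Finset.sum_const, card_range, hSdef, Nat.cast_smul_eq_nsmul]
  -- T is divisible by ℓ entrywise (uses ℓ odd)
  have hgauss : ℓ ∣ ∑ j ∈ range ℓ, j := by
    have h2 : (∑ j ∈ range ℓ, j) * 2 = ℓ * (ℓ - 1) := Finset.sum_range_id_mul_two ℓ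
    have hd : ℓ ∣ (∑ j ∈ range ℓ, j) * 2 := h2 ▸ Dvd.intro _ rfl
    rcases ((Fact.out : ℓ.Prime).dvd_mul.mp hd) with h | h
    · exact h
    · exact absurd ((Nat.prime_dvd_prime_iff_eq (Fact.out : ℓ.Prime) Nat.prime_two).mp h)
        (by rintro rfl; exact (Nat.not_odd_iff_even.mpr even_two) hodd)
  have hTdvd : ∀ i j, (ℓ : R) ∣ T i j := by
    intro i j
    have hsplit : T i j = (∑ j' ∈ range ℓ, ∑ i' ∈ range j', (M ^ i' - 1) i j)
        + ((∑ j' ∈ range ℓ, j' : ℕ) : R) * (1 : Mat) i j := by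
      rw [hTdef]
      simp only [Matrix.sum_apply]
      calc ∑ x ∈ range ℓ, ∑ c ∈ range x, (M ^ c) i j
          = ∑ x ∈ range ℓ, ∑ c ∈ range x, (((M ^ c - 1) i j) + (1 : Mat) i j) := by
            refine Finset.sum_congr rfl fun x _ => Finset.sum_congr rfl fun c _ => ?_
            simp [Matrix.sub_apply]
        _ = (∑ x ∈ range ℓ, ∑ c ∈ range x, (M ^ c - 1) i j)
            + ∑ x ∈ range ℓ, ∑ c ∈ range x, (1 : Mat) i j := by
            simp [Finset.sum_add_distrib]
        _ = (∑ j' ∈ range ℓ, ∑ i' ∈ range j', (M ^ i' - 1) i j)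
            + ((∑ j' ∈ range ℓ, j' : ℕ) : R) * (1 : Mat) i j := by
            congr 1
            simp only [Finset.sum_const, card_range, ← Finset.sum_smul]
            rw [nsmul_eq_mul]
    rw [hsplit]
    refine dvd_add (Finset.dvd_sum fun j' _ => Finset.dvd_sum fun i' _ => pow_cong hcong i' i j) ?_
    exact Dvd.dvd.mul_right (by exact_mod_cast Nat.cast_dvd_cast (α := R) hgauss) _
  -- choose square-root-of-ℓ divisions
  obtain ⟨A₀, hA₀⟩ : ∃ A₀ : Mat, A = (ℓ : R) • A₀ :=
    ⟨fun i j => (hcong i j).choose, by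
      funext i j;
      exact (hcong i j).choose_spec⟩
  obtain ⟨T₀, hT₀⟩ : ∃ T₀ : Mat, T = (ℓ : R) • T₀ :=
    ⟨fun i j => (hTdvd i j).choose, by
      funext i j;
      exact (hTdvd i j).choose_spec⟩
  set U : Mat := 1 + (ℓ : R) • (T₀ * A₀) with hUdef
  have hSU : S = (ℓ : R) • U := by
    have h1 : S = (ℓ : R) • 1 + T * A := by rw [hTA]; abel
    rw [h1, hT₀, hA₀, hUdef, smul_add, Matrix.smul_mul, Matrix.mul_smul]
  have hU : IsUnit U := by
    apply isUnit_of_cong 1 isUnit_one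
    intro i j
    have : U - (1 : R) • 1 = (ℓ : R) • (T₀ * A₀) := by rw [hUdef]; simp
    rw [this]
    exact ⟨(T₀ * A₀) i j, by simp [Matrix.smul_apply, smul_eq_mul]⟩
  -- commutation
  have hTcA : Commute T A := by
    rw [hTdef, hAdef]
    exact Commute.sum_left _ _ _ fun j _ => commute_sum_pow M j
  have hA₀A : Commute A₀ A := smul_commute_cancel (by rw [← hA₀])
  have hT₀A : Commute T₀ A := smul_commute_cancel (by rw [← hT₀]; exact hTcA)
  have hUA : Commute U A := by
    rw [hUdef]
    exact (Commute.one_left A).add_left ((hT₀A.mul_left hA₀A).smul_left _)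
  -- finish
  have hzero : ((ℓ : R)) ^ r • (U * A) ^ r = 0 := by
    rw [← smul_pow, ← Matrix.smul_mul, ← hSU, hgeom, hqu]
  have h1 : (U * A) ^ r = 0 := smul_pow_cancel hzero
  rw [hUA.mul_pow] at h1
  obtain ⟨u, hu⟩ := hU.pow (n := r)
  have : A ^ r = (↑u⁻¹ : Mat) * (U ^ r * A ^ r) := by
    rw [← hu, ← mul_assoc, Units.inv_mul, one_mul]
  rw [hAdef] at this ⊢
  rw [this, h1, mul_zero]

end QUaux

namespace QUaux
variable {ℓ : ℕ} [Fact ℓ.Prime] {r : ℕ}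
local notation "R" => PadicInt ℓ
local notation "Mat" => Matrix (Fin r) (Fin r) (PadicInt ℓ)

lemma main (hodd : Odd ℓ) : ∀ k, 1 ≤ k → ∀ M : Mat,
    (∀ i j, (ℓ : R) ∣ (M - 1) i j) → (M ^ k - 1) ^ r = 0 → (M - 1) ^ r = 0 := by
  intro k
  induction k using Nat.strong_induction_on with
  | _ k ih =>
    intro hk M hcong hqu
    by_cases hdvd : ℓ ∣ k
    · obtain ⟨k', rfl⟩ := hdvd
      have hℓ2 : 2 ≤ ℓ := (Fact.out : ℓ.Prime).two_le
      have hk' : 1 ≤ k' := by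
        rcases Nat.eq_zero_or_pos k' with h | h
        · subst h; omega
        · exact h
      have hk'lt : k' < ℓ * k' := by
        calc k' = 1 * k' := (one_mul k').symm
        _ < ℓ * k' := by
          exact (Nat.mul_lt_mul_right hk').mpr (by omega)
      have hcong' := pow_cong hcong ℓ
      have h2 : ((M ^ ℓ) ^ k' - 1) ^ r = 0 := by rw [← pow_mul]; exact hqu
      have h3 := ih k' hk'lt hk' (M ^ ℓ) hcong' h2
      exact ell_case hodd hcong h3
    · exact coprime_case hcong hdvd hqu

end QUaux

/-- Let `ℓ` be an odd prime and `M` an `r × r` matrix over the ℓ-adic integers `ℤ_[ℓ]`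
congruent to the identity modulo `ℓ` (every entry of `M - 1` lies in `ℓ ℤ_[ℓ]`).
If `M` is quasi-unipotent, i.e. `(M ^ k - 1) ^ r = 0` for some `k ≥ 1`,
then `M` is unipotent, i.e. `(M - 1) ^ r = 0`. -/
theorem matrix_one_mod_ell_quasiUnipotent_is_unipotent
    (ℓ : ℕ) [Fact ℓ.Prime] (hodd : Odd ℓ) (r : ℕ)
    (M : Matrix (Fin r) (Fin r) ℤ_[ℓ])
    (hcong : ∀ i j, (ℓ : ℤ_[ℓ]) ∣ (M - 1) i j)
    (k : ℕ) (hk : 1 ≤ k) (hqu : (M ^ k - 1) ^ r = 0) :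
    (M - 1) ^ r = 0 :=
  QUaux.main hodd k hk M hcong hqu
end

section
/- Let M be an r×r matrix with entries in the ring ℤ₂ of 2-adic integers such that M is congruent to the identity matrix modulo 4 (i.e., every entry of M - 1 lies in 4ℤ₂). If M is quasi-unipotent, i.e., there exists an integer k ≥ 1 such that (M^k - 1)^r = 0, then M is unipotent, i.e., (M - 1)^r = 0. -/
open PadicInt Finset

private lemma phi_zero_of_two_dvd (x : ℤ_[2]) (h : (2:ℤ_[2]) ∣ x) :
    PadicInt.toZMod x = 0 := by
  obtain ⟨c, rfl⟩ := h
  have h2 : (PadicInt.toZMod (2 : ℤ_[2])) = (2 : ZMod 2) := map_ofNat _ 2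
  rw [map_mul, h2]
  simp [show (2 : ZMod 2) = 0 by decide]

private lemma isUnit_of_map_det_ne_zero {r : ℕ} (A : Matrix (Fin r) (Fin r) ℤ_[2])
    (h : (A.map PadicInt.toZMod).det ≠ 0) : IsUnit A := by
  rw [Matrix.isUnit_iff_isUnit_det]
  by_contra hu
  have hlt : ‖A.det‖ < 1 := PadicInt.not_isUnit_iff.mp hu
  have hdvd : ((2:ℕ):ℤ_[2]) ∣ A.det := (PadicInt.norm_lt_one_iff_dvd _).mp hlt
  have : PadicInt.toZMod A.det = 0 := phi_zero_of_two_dvd _ (by exact_mod_cast hdvd)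
  apply h
  have hh := RingHom.map_det PadicInt.toZMod A
  rw [show A.map ⇑PadicInt.toZMod = PadicInt.toZMod.mapMatrix A from rfl, ← hh, this]

private lemma pow_cong {r : ℕ} (M : Matrix (Fin r) (Fin r) ℤ_[2])
    (hcong : ∀ i j, (4 : ℤ_[2]) ∣ (M - 1) i j) (m : ℕ) :
    ∀ i j, (4 : ℤ_[2]) ∣ (M ^ m - 1) i j := by
  intro i j
  rw [← mul_geom_sum M m, Matrix.mul_apply]
  exact Finset.dvd_sum fun t _ => (hcong i t).mul_right _

private lemma map_eq_one {r : ℕ} (A : Matrix (Fin r) (Fin r) ℤ_[2])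
    (h : ∀ i j, (2 : ℤ_[2]) ∣ (A - 1) i j) :
    A.map PadicInt.toZMod = 1 := by
  ext i j
  have : A i j = (A - 1) i j + (1 : Matrix (Fin r) (Fin r) ℤ_[2]) i j := by
    simp [Matrix.sub_apply]
  rw [Matrix.map_apply, this, map_add, phi_zero_of_two_dvd _ (h i j), zero_add]
  by_cases hij : i = j <;> simp [Matrix.one_apply, hij, map_one]

/-- Let `M` be an `r × r` matrix over the 2-adic integers `ℤ_[2]`
congruent to the identity modulo `4` (every entry of `M - 1` lies in `4 ℤ_[2]`).
If `M` is quasi-unipotent, i.e. `(M ^ k - 1) ^ r = 0` for some `k ≥ 1`,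
then `M` is unipotent, i.e. `(M - 1) ^ r = 0`. -/
theorem matrix_one_mod_four_quasiUnipotent_is_unipotent
    (r : ℕ) (M : Matrix (Fin r) (Fin r) ℤ_[2])
    (hcong : ∀ i j, (4 : ℤ_[2]) ∣ (M - 1) i j)
    (k : ℕ) (hk : 1 ≤ k) (hqu : (M ^ k - 1) ^ r = 0) :
    (M - 1) ^ r = 0 := by
  revert hqu hk
  induction k using Nat.strong_induction_on with
  | _ k ih =>
  intro hk hqu
  rcases Nat.even_or_odd k with ⟨m, hm⟩ | hodd
  · -- even case : k = m + m
    have hm1 : 1 ≤ m := by omega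
    have hmk : m < k := by omega
    set X := M ^ m with hX
    have h4 : ∀ i j, (4 : ℤ_[2]) ∣ (X - 1) i j := pow_cong M hcong m
    set E : Matrix (Fin r) (Fin r) ℤ_[2] := fun i j => (h4 i j).choose with hE
    set C : Matrix (Fin r) (Fin r) ℤ_[2] := 1 + (2:ℤ_[2]) • E with hC
    have hB : X + 1 = (2:ℤ_[2]) • C := by
      ext i j
      have hs := (h4 i j).choose_spec
      simp only [Matrix.add_apply, Matrix.smul_apply, hC, Matrix.sub_apply] at hs ⊢
      have : X i j = 4 * E i j + (1 : Matrix (Fin r) (Fin r) ℤ_[2]) i j := by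
        rw [hE]; show X i j = 4 * (h4 i j).choose + _; linear_combination (h4 i j).choose_spec - Matrix.sub_apply X 1 i j
      rw [this]; simp only [smul_eq_mul]; ring
    have hfac : M ^ k - 1 = (X - 1) * (X + 1) := by
      have : M ^ k = X ^ 2 := by rw [hX, ← pow_mul]; congr 1; omega
      rw [this]; noncomm_ring
    have hcomm : Commute (X - 1) (X + 1) :=
      (((Commute.refl X).sub_left (Commute.one_left X)).add_right
        ((Commute.one_right _)))
    have key : (2:ℤ_[2]) ^ r • ((X - 1) ^ r * C ^ r) = 0 := by
      rw [← mul_smul_comm, ← smul_pow, ← hB, ← hcomm.mul_pow, ← hfac, hqu]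
    have hzero : (X - 1) ^ r * C ^ r = 0 := by
      ext i j
      have := congrFun (congrFun key i) j
      simp only [Matrix.smul_apply, Matrix.zero_apply, smul_eq_mul] at this
      have h2 : ((2:ℤ_[2]) ^ r) ≠ 0 := pow_ne_zero _ two_ne_zero
      exact (mul_eq_zero.mp this).resolve_left h2
    have hCunit : IsUnit C := by
      apply isUnit_of_map_det_ne_zero
      have : C.map PadicInt.toZMod = 1 := by
        apply map_eq_one
        intro i j
        have : (C - 1) i j = 2 * E i j := by
          simp [hC, Matrix.sub_apply, Matrix.add_apply, Matrix.smul_apply]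
        rw [this]
        exact Dvd.intro _ rfl
      rw [this, Matrix.det_one]
      exact one_ne_zero
    have hXr : (X - 1) ^ r = 0 := by
      obtain ⟨u, hu⟩ := hCunit.pow r
      rw [← hu] at hzero
      exact (Units.mul_left_eq_zero u).mp hzero
    exact ih m hmk hm1 hXr
  · -- odd case
    set S : Matrix (Fin r) (Fin r) ℤ_[2] := ∑ i ∈ Finset.range k, M ^ i with hS
    have hfac : M ^ k - 1 = (M - 1) * S := (mul_geom_sum M k).symm
    have hcomm : Commute (M - 1) S :=
      Commute.sum_right _ _ _ fun i _ =>
        ((Commute.refl M).pow_right i).sub_left (Commute.one_left _)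
    have hqu' : (M - 1) ^ r * S ^ r = 0 := by
      rw [← hcomm.mul_pow, ← hfac, hqu]
    have hSunit : IsUnit S := by
      apply isUnit_of_map_det_ne_zero
      have hM1 : M.map PadicInt.toZMod = 1 :=
        map_eq_one M fun i j => dvd_trans ⟨2, by norm_num⟩ (hcong i j)
      have hmap : S.map PadicInt.toZMod =
          ∑ i ∈ Finset.range k, (M.map PadicInt.toZMod) ^ i := by
        rw [hS]
        show (PadicInt.toZMod.mapMatrix :
            Matrix (Fin r) (Fin r) ℤ_[2] →+* Matrix (Fin r) (Fin r) (ZMod 2)) S = _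
        rw [hS, map_sum]
        exact Finset.sum_congr rfl fun i _ => by
          rw [map_pow, RingHom.mapMatrix_apply]
      rw [hmap, hM1]
      have hk2 : ((k : ZMod 2)) = 1 := by
        have hmod : k % 2 = 1 := Nat.odd_iff.mp hodd
        rw [show (k : ZMod 2) = ((k % 2 : ℕ) : ZMod 2) from (ZMod.natCast_mod k 2).symm,
          hmod, Nat.cast_one]
      simp only [one_pow, Finset.sum_const, Finset.card_range]
      rw [← Nat.cast_smul_eq_nsmul (ZMod 2), hk2, one_smul, Matrix.det_one]
      exact one_ne_zero
    obtain ⟨u, hu⟩ := hSunit.pow r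
    rw [← hu] at hqu'
    exact (Units.mul_left_eq_zero u).mp hqu'
end
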